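/- Let a ≠ 0, E, L, Q, r, e ∈ ℝ with E² < 1, let Δ^{KN} := r² + a² + e² − 2r ≠ 0 and P := E(r²+a²) − La, and let z₋, z₊ satisfy 0 < z₋ < min(1, z₊) and a²(1−E²)z² − (a²(1−E²)+L²+Q)z + Q = a²(1−E²)(z−z₋)(z−z₊) for all z. Then the change in azimuth over a quarter of a latitudinal oscillation, Δφ^{GTR} = ∫₀^{z₋} [ (aP/Δ^{KN} − aE) + L/(1−z) ] dz / (2√z · |a|·√(1−E²) · √((z₊−z)(z₋−z))), equals (π/(2|a|√(1−E²)√z₊)) · [ L·F₁(1/2, 1/2, 1; 1; z₋/z₊, z₋) + (aP/Δ^{KN} − aE)·F(1/2, 1/2; 1; z₋/z₊) ]. -/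

import Mathlib

/-!
Substituting `z = z₋ sin² θ` on `(0, π/2)` cancels both endpoint singularities against the
Jacobian `2 z₋ sin θ cos θ` and turns the integral into
`(|a| √(1 - E²) √z₊)⁻¹ ∫₀^{π/2} (K + L / (1 - z₋ sin² θ)) / √(1 - (z₋/z₊) sin² θ) dθ`,
`K = aP/Δ - aE`. Expanding `(1 - x sin² θ)^{-1/2} = Σ (1/2)ₘ/m! xᵐ sin^{2m} θ` and
`(1 - y sin² θ)⁻¹ = Σ yⁿ sin^{2n} θ` and integrating term by term with Wallis' formula
`∫₀^{π/2} sin^{2k} θ dθ = (π/2) (1/2)ₖ/k!` gives exactly the Gauss and Appell series.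
The binomial expansion itself comes from the same term-by-term integration applied to the
geometric series, compared with the elementary integral
`∫₀^{π/2} dθ / (1 - w sin² θ) = π / (2 √(1 - w))`.
-/

/-- The Pochhammer symbol `(q)_k = q(q+1)⋯(q+k−1)`. -/
noncomputable def poch (q : ℝ) (k : ℕ) : ℝ := ∏ i ∈ Finset.range k, (q + (i : ℝ))

/-- The Gauss hypergeometric series `F(a,b;c;x) = Σ_n (a)_n (b)_n / ((c)_n n!) xⁿ`. -/
noncomputable def gaussF (a b c x : ℝ) : ℝ :=
  ∑' n : ℕ, poch a n * poch b n / (poch c n * (n.factorial : ℝ)) * x ^ n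

/-- Appell's first hypergeometric series
`F₁(α,β,β′;γ;x,y) = Σ_{m,n} (α)_{m+n}(β)_m(β′)_n/((γ)_{m+n} m! n!) x^m y^n`. -/
noncomputable def appellF1 (α β β' γ x y : ℝ) : ℝ :=
  ∑' p : ℕ × ℕ,
    poch α (p.1 + p.2) * poch β p.1 * poch β' p.2 /
        (poch γ (p.1 + p.2) * (p.1.factorial : ℝ) * (p.2.factorial : ℝ)) *
      x ^ p.1 * y ^ p.2

open Real Set MeasureTheory

lemma poch_succ (q : ℝ) (k : ℕ) : poch q (k + 1) = poch q k * (q + k) := by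
  simp [poch, Finset.prod_range_succ]

lemma poch_one (k : ℕ) : poch 1 k = k.factorial := by
  induction k with
  | zero => simp [poch]
  | succ n ih => rw [poch_succ, ih, Nat.factorial_succ]; push_cast; ring

noncomputable def wallisCoeff (k : ℕ) : ℝ := poch (1 / 2) k / k.factorial

lemma wallisCoeff_nonneg (k : ℕ) : 0 ≤ wallisCoeff k :=
  div_nonneg (Finset.prod_nonneg fun i _ => by positivity) (Nat.cast_nonneg _)

lemma wallisCoeff_succ (k : ℕ) :
    wallisCoeff (k + 1) = wallisCoeff k * ((k + 1 / 2) / (k + 1)) := by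
  rw [wallisCoeff, wallisCoeff, poch_succ, Nat.factorial_succ]
  push_cast
  field_simp
  ring

theorem integral_sin_pow_even_zero_pi_div_two (k : ℕ) :
    ∫ θ in (0 : ℝ)..π / 2, sin θ ^ (2 * k) = π / 2 * wallisCoeff k := by
  induction k with
  | zero => simp [wallisCoeff, poch]
  | succ n ih =>
    rw [mul_add_one, integral_sin_pow, ih, wallisCoeff_succ]
    simp only [sin_zero, cos_pi_div_two, mul_zero, sub_zero, Nat.cast_mul, Nat.cast_ofNat]
    field_simp
    ring

lemma one_sub_mul_sin_sq_pos {w : ℝ} (hw : w < 1) (θ : ℝ) : 0 < 1 - w * sin θ ^ 2 := by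
  have := sin_sq_le_one θ
  rcases le_total w 0 with h | h <;> nlinarith [sq_nonneg (sin θ)]

lemma abs_mul_sin_sq_lt_one {w : ℝ} (hw : |w| < 1) (θ : ℝ) : |w * sin θ ^ 2| < 1 := by
  rw [abs_mul, abs_sq]
  exact (mul_le_of_le_one_right (abs_nonneg w) (sin_sq_le_one θ)).trans_lt hw

lemma continuous_inv_one_sub_mul_sin_sq {w : ℝ} (hw : w < 1) :
    Continuous fun θ => (1 - w * sin θ ^ 2)⁻¹ :=
  (by fun_prop : Continuous fun θ => 1 - w * sin θ ^ 2).inv₀ fun θ =>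
    (one_sub_mul_sin_sq_pos hw θ).ne'

lemma continuous_inv_sqrt_one_sub_mul_sin_sq {w : ℝ} (hw : w < 1) :
    Continuous fun θ => (√(1 - w * sin θ ^ 2))⁻¹ :=
  (by fun_prop : Continuous fun θ => √(1 - w * sin θ ^ 2)).inv₀ fun θ =>
    (sqrt_pos.2 (one_sub_mul_sin_sq_pos hw θ)).ne'

/-- The primitive is `arctan (c tan t) / c`, written via `tan (A - B)` as `t` plus a correction
that stays smooth across `t = π / 2`. -/
lemma hasDerivAt_primitive_inv_one_sub_mul_sin_sq {c : ℝ} (hc : 0 < c) (θ : ℝ) :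
    HasDerivAt (fun t => (t + arctan ((c - 1) * sin t * cos t / (1 + (c - 1) * sin t ^ 2))) / c)
      (1 - (1 - c ^ 2) * sin θ ^ 2)⁻¹ θ := by
  have hD : 0 < 1 + (c - 1) * sin θ ^ 2 := by
    linarith [one_sub_mul_sin_sq_pos (w := 1 - c) (by linarith) θ]
  have hW := one_sub_mul_sin_sq_pos (w := 1 - c ^ 2) (by nlinarith) θ
  have hN : HasDerivAt (fun t => (c - 1) * sin t * cos t)
      ((c - 1) * cos θ * cos θ + (c - 1) * sin θ * -sin θ) θ :=
    ((hasDerivAt_sin θ).const_mul _).mul (hasDerivAt_cos θ)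
  have hDen : HasDerivAt (fun t => 1 + (c - 1) * sin t ^ 2) ((c - 1) * (2 * sin θ * cos θ)) θ := by
    simpa using (((hasDerivAt_sin θ).pow 2).const_mul (c - 1)).const_add 1
  refine (((hasDerivAt_id' θ).add (hN.div hDen hD.ne').arctan).div_const c).congr_deriv ?_
  simp only [Pi.div_apply]
  field_simp
  rw [eq_div_iff (by linarith), cos_sq']
  ring

theorem integral_inv_one_sub_mul_sin_sq {w : ℝ} (hw : w < 1) :
    ∫ θ in (0 : ℝ)..π / 2, (1 - w * sin θ ^ 2)⁻¹ = π / (2 * √(1 - w)) := by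
  have hc : 0 < √(1 - w) := sqrt_pos.2 (by linarith)
  have hw' : 1 - √(1 - w) ^ 2 = w := by rw [sq_sqrt (by linarith)]; ring
  rw [intervalIntegral.integral_eq_sub_of_hasDerivAt
    (fun θ _ => hw' ▸ hasDerivAt_primitive_inv_one_sub_mul_sin_sq hc θ)
    ((continuous_inv_one_sub_mul_sin_sq hw).intervalIntegrable _ _)]
  simp only [sin_zero, cos_pi_div_two, mul_zero, zero_mul, zero_div, arctan_zero, add_zero]
  ring

theorem hasSum_integral_mul_sin_pow {ι : Type*} [Countable ι] {c : ι → ℝ} (hc : Summable c)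
    (k : ι → ℕ) {f : ℝ → ℝ} (hf : ∀ θ, HasSum (fun i => c i * sin θ ^ (2 * k i)) (f θ)) :
    HasSum (fun i => c i * (π / 2 * wallisCoeff (k i))) (∫ θ in (0 : ℝ)..π / 2, f θ) := by
  have hbound : ∀ i θ, ‖c i * sin θ ^ (2 * k i)‖ ≤ |c i| := fun i θ => by
    rw [norm_mul, norm_pow, Real.norm_eq_abs, Real.norm_eq_abs]
    exact mul_le_of_le_one_right (abs_nonneg _) (pow_le_one₀ (abs_nonneg _) (abs_sin_le_one θ))
  simpa only [intervalIntegral.integral_const_mul, integral_sin_pow_even_zero_pi_div_two] using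
    intervalIntegral.hasSum_integral_of_dominated_convergence (μ := volume) (a := 0) (b := π / 2)
      (fun i _ => |c i|)
      (fun i => (by fun_prop : Continuous _).aestronglyMeasurable)
      (fun i => ae_of_all _ fun θ _ => hbound i θ) (ae_of_all _ fun _ _ => hc.abs)
      intervalIntegrable_const (ae_of_all _ fun θ _ => hf θ)

theorem hasSum_wallisCoeff_mul_pow {w : ℝ} (hw : |w| < 1) :
    HasSum (fun m => wallisCoeff m * w ^ m) (√(1 - w))⁻¹ := by
  have hgeom : ∀ θ, HasSum (fun m => w ^ m * sin θ ^ (2 * m)) (1 - w * sin θ ^ 2)⁻¹ := fun θ => by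
    simpa only [pow_mul, ← mul_pow] using
      hasSum_geometric_of_abs_lt_one (abs_mul_sin_sq_lt_one hw θ)
  have h := (hasSum_integral_mul_sin_pow (summable_geometric_of_abs_lt_one hw) (fun m => m)
    hgeom).mul_left (2 / π)
  rw [integral_inv_one_sub_mul_sin_sq (lt_of_le_of_lt (le_abs_self w) hw),
    show 2 / π * (π / (2 * √(1 - w))) = (√(1 - w))⁻¹ by field_simp] at h
  exact h.congr_fun fun m => by field_simp

lemma summable_norm_wallisCoeff_mul_pow {w : ℝ} (hw : |w| < 1) :
    Summable fun m => ‖wallisCoeff m * w ^ m‖ := by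
  simpa [abs_of_nonneg (wallisCoeff_nonneg _)] using
    (hasSum_wallisCoeff_mul_pow (w := |w|) (by rwa [abs_abs])).summable

theorem integral_inv_sqrt_one_sub_mul_sin_sq {x : ℝ} (hx : |x| < 1) :
    ∫ θ in (0 : ℝ)..π / 2, (√(1 - x * sin θ ^ 2))⁻¹ = π / 2 * gaussF (1 / 2) (1 / 2) 1 x := by
  have h := hasSum_integral_mul_sin_pow (hasSum_wallisCoeff_mul_pow hx).summable (fun m => m)
    fun θ => by
        simpa only [mul_pow, pow_mul, mul_assoc] using
        hasSum_wallisCoeff_mul_pow (abs_mul_sin_sq_lt_one hx θ)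
  rw [← h.tsum_eq, gaussF, ← tsum_mul_left]
  refine tsum_congr fun m => ?_
  rw [poch_one, wallisCoeff]
  field_simp

theorem integral_inv_sqrt_one_sub_mul_sin_sq_mul_inv_one_sub_mul_sin_sq {x y : ℝ}
    (hx : |x| < 1) (hy : |y| < 1) :
    ∫ θ in (0 : ℝ)..π / 2, (√(1 - x * sin θ ^ 2))⁻¹ * (1 - y * sin θ ^ 2)⁻¹
      = π / 2 * appellF1 (1 / 2) (1 / 2) 1 1 x y := by
  have hgeom {w : ℝ} (hw : |w| < 1) : Summable fun n => ‖w ^ n‖ := by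
    simpa [norm_pow] using summable_geometric_of_lt_one (abs_nonneg w) hw
  have hc := summable_mul_of_summable_norm (summable_norm_wallisCoeff_mul_pow hx) (hgeom hy)
  have h := hasSum_integral_mul_sin_pow hc (fun p => p.1 + p.2) fun θ => by
    have hxθ := abs_mul_sin_sq_lt_one hx θ
    have hyθ := abs_mul_sin_sq_lt_one hy θ
    refine ((hasSum_wallisCoeff_mul_pow hxθ).mul (hasSum_geometric_of_abs_lt_one hyθ)
      (summable_mul_of_summable_norm (summable_norm_wallisCoeff_mul_pow hxθ) (hgeom hyθ))).congr_fun
      fun p => ?_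
    ring
  rw [← h.tsum_eq, appellF1, ← tsum_mul_left]
  refine tsum_congr fun p => ?_
  rw [poch_one, poch_one, wallisCoeff, wallisCoeff]
  field_simp

theorem integral_add_div_div_sqrt_one_sub_mul_sin_sq {x y K L : ℝ} (hx : |x| < 1) (hy : |y| < 1) :
    ∫ θ in (0 : ℝ)..π / 2, (K + L / (1 - y * sin θ ^ 2)) / √(1 - x * sin θ ^ 2)
      = π / 2 * (K * gaussF (1 / 2) (1 / 2) 1 x + L * appellF1 (1 / 2) (1 / 2) 1 1 x y) := by
  have hX := continuous_inv_sqrt_one_sub_mul_sin_sq ((le_abs_self x).trans_lt hx)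
  have hXY : Continuous fun θ => (√(1 - x * sin θ ^ 2))⁻¹ * (1 - y * sin θ ^ 2)⁻¹ :=
    hX.mul (continuous_inv_one_sub_mul_sin_sq ((le_abs_self y).trans_lt hy))
  have hsplit : (fun θ => (K + L / (1 - y * sin θ ^ 2)) / √(1 - x * sin θ ^ 2))
      = fun θ => K * (√(1 - x * sin θ ^ 2))⁻¹
        + L * ((√(1 - x * sin θ ^ 2))⁻¹ * (1 - y * sin θ ^ 2)⁻¹) := by
    ext θ
    ring
  rw [hsplit, intervalIntegral.integral_add ((hX.const_mul K).intervalIntegrable _ _)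
      ((hXY.const_mul L).intervalIntegrable _ _),
    intervalIntegral.integral_const_mul, intervalIntegral.integral_const_mul,
    integral_inv_sqrt_one_sub_mul_sin_sq hx,
    integral_inv_sqrt_one_sub_mul_sin_sq_mul_inv_one_sub_mul_sin_sq hx hy]
  ring

lemma strictMonoOn_mul_sin_sq {b : ℝ} (hb : 0 < b) :
    StrictMonoOn (fun θ => b * sin θ ^ 2) (Icc 0 (π / 2)) := by
  intro θ₁ h₁ θ₂ h₂ hlt
  have hsin := strictMonoOn_sin ⟨by linarith [h₁.1, pi_pos], h₁.2⟩
    ⟨by linarith [h₂.1, pi_pos], h₂.2⟩ hlt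
  have h₁' := sin_nonneg_of_nonneg_of_le_pi h₁.1 (by linarith [h₁.2, pi_pos])
  exact mul_lt_mul_of_pos_left (pow_lt_pow_left₀ hsin h₁' two_ne_zero) hb

lemma image_mul_sin_sq_Ioo {b : ℝ} (hb : 0 < b) :
    (fun θ => b * sin θ ^ 2) '' Ioo 0 (π / 2) = Ioo 0 b := by
  have hmono := strictMonoOn_mul_sin_sq hb
  have hπ := pi_div_two_pos
  have hleft : b * sin 0 ^ 2 = 0 := by simp
  have hright : b * sin (π / 2) ^ 2 = b := by simp
  refine Subset.antisymm ?_ ?_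
  · rintro _ ⟨θ, hθ, rfl⟩
    have hθ' := Ioo_subset_Icc_self hθ
    exact ⟨hleft.symm.trans_lt (hmono (left_mem_Icc.2 hπ.le) hθ' hθ.1),
      (hmono hθ' (right_mem_Icc.2 hπ.le) hθ.2).trans_eq hright⟩
  · simpa [hleft, hright] using
      intermediate_value_Ioo hπ.le (by fun_prop : ContinuousOn (fun θ => b * sin θ ^ 2) _)

/-- No integrability is assumed: a change of variables over an open set matches the Bochner
integrals also when both are the junk value `0`. -/
theorem intervalIntegral_eq_integral_Ioo_mul_sin_sq {b : ℝ} (hb : 0 < b) (f : ℝ → ℝ) :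
    ∫ z in 0..b, f z = ∫ θ in Ioo 0 (π / 2), b * (2 * sin θ * cos θ) * f (b * sin θ ^ 2) := by
  have hderiv : ∀ θ ∈ Ioo 0 (π / 2), HasDerivWithinAt (fun θ => b * sin θ ^ 2)
      (b * (2 * sin θ * cos θ)) (Ioo 0 (π / 2)) θ := fun θ _ => by
    simpa [mul_assoc] using (((hasDerivAt_sin θ).pow 2).const_mul b).hasDerivWithinAt
  rw [intervalIntegral.integral_of_le hb.le, integral_Ioc_eq_integral_Ioo,
    ← image_mul_sin_sq_Ioo hb, integral_image_eq_integral_abs_deriv_smul measurableSet_Ioo hderiv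
      ((strictMonoOn_mul_sin_sq hb).mono Ioo_subset_Icc_self).injOn]
  refine setIntegral_congr_fun measurableSet_Ioo fun θ hθ => ?_
  have hs := sin_pos_of_pos_of_lt_pi hθ.1 (by linarith [hθ.2, pi_pos])
  have hc := cos_pos_of_mem_Ioo ⟨by linarith [hθ.1, pi_pos], hθ.2⟩
  rw [smul_eq_mul, abs_of_pos (by positivity)]

theorem integral_div_sqrt_mul_sqrt_sub {zn zp : ℝ} (h0 : 0 < zn) (h2 : zn < zp) (φ : ℝ → ℝ) :
    ∫ z in 0..zn, φ z / (2 * √z * √((zp - z) * (zn - z)))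
      = (√zp)⁻¹ * ∫ θ in 0..π / 2, φ (zn * sin θ ^ 2) / √(1 - zn / zp * sin θ ^ 2) := by
  have hzp : 0 < zp := h0.trans h2
  rw [intervalIntegral_eq_integral_Ioo_mul_sin_sq h0, intervalIntegral.integral_of_le
    pi_div_two_pos.le, integral_Ioc_eq_integral_Ioo, ← integral_const_mul]
  refine setIntegral_congr_fun measurableSet_Ioo fun θ hθ => ?_
  have hs := sin_pos_of_pos_of_lt_pi hθ.1 (by linarith [hθ.2, pi_pos])
  have hc := cos_pos_of_mem_Ioo ⟨by linarith [hθ.1, pi_pos], hθ.2⟩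
  have hx : 0 < 1 - zn / zp * sin θ ^ 2 :=
    one_sub_mul_sin_sq_pos ((div_lt_one hzp).2 h2) θ
  have hjacobian : √(zn * sin θ ^ 2) * √((zp - zn * sin θ ^ 2) * (zn - zn * sin θ ^ 2))
      = zn * sin θ * cos θ * (√zp * √(1 - zn / zp * sin θ ^ 2)) := by
    rw [← sqrt_mul (by positivity), ← sqrt_mul hzp.le,
      ← sqrt_sq (by positivity : 0 ≤ zn * sin θ * cos θ),
      ← sqrt_mul (sq_nonneg _)]
    congr 1
    rw [mul_pow, cos_sq']
    field_simp
  rw [mul_assoc 2 √(zn * sin θ ^ 2), hjacobian]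
  field_simp

theorem stmt_10_general (a E L Δ P zn zp : ℝ)
    (h0 : 0 < zn) (h1 : zn < 1) (h2 : zn < zp) :
    ∫ z in (0 : ℝ)..zn,
        ((a * P / Δ - a * E) + L / (1 - z)) /
          (2 * Real.sqrt z * (|a| * Real.sqrt (1 - E ^ 2)) *
            Real.sqrt ((zp - z) * (zn - z)))
      = Real.pi / (2 * |a| * Real.sqrt (1 - E ^ 2) * Real.sqrt zp) *
          (L * appellF1 (1 / 2) (1 / 2) 1 1 (zn / zp) zn +
            (a * P / Δ - a * E) * gaussF (1 / 2) (1 / 2) 1 (zn / zp)) := by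
  have hzp : 0 < zp := h0.trans h2
  have hx : |zn / zp| < 1 := by rw [abs_of_pos (div_pos h0 hzp)]; exact (div_lt_one hzp).2 h2
  have hy : |zn| < 1 := by rwa [abs_of_pos h0]
  set K := a * P / Δ - a * E
  set c := |a| * √(1 - E ^ 2)
  calc _ = c⁻¹ * ∫ z in 0..zn, (K + L / (1 - z)) / (2 * √z * √((zp - z) * (zn - z))) := by
        rw [← intervalIntegral.integral_const_mul]
        congr 1
        ext z
        ring
    _ = c⁻¹ * ((√zp)⁻¹ * (π / 2 * (K * gaussF (1 / 2) (1 / 2) 1 (zn / zp)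
          + L * appellF1 (1 / 2) (1 / 2) 1 1 (zn / zp) zn))) := by
        rw [integral_div_sqrt_mul_sqrt_sub h0 h2, integral_add_div_div_sqrt_one_sub_mul_sin_sq hx hy]
    _ = _ := by ring

/-- frame dragging of a timelike spherical Kerr–Newman orbit.  With
`Δ^{KN} = r²+a²+e²−2r ≠ 0`, `P = E(r²+a²) − La`, and `z∓` (written `zm`, `zp`) the
roots of `a²(1−E²)z² − (a²(1−E²)+L²+Q)z + Q`, the azimuthal advance over a quarter
latitudinal oscillation equals
`(π/(2|a|√(1−E²)√z₊))[L·F₁(1/2,1/2,1;1;z₋/z₊,z₋) + (aP/Δ−aE)·F(1/2,1/2;1;z₋/z₊)]`. -/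
theorem stmt_10 (a E L Q r e Δ P zn zp : ℝ) (ha : a ≠ 0) (hE : E ^ 2 < 1)
    (hΔ : Δ = r ^ 2 + a ^ 2 + e ^ 2 - 2 * r) (hΔ0 : Δ ≠ 0)
    (hP : P = E * (r ^ 2 + a ^ 2) - L * a)
    (h0 : 0 < zn) (h1 : zn < 1) (h2 : zn < zp)
    (hroots : ∀ z : ℝ,
        a ^ 2 * (1 - E ^ 2) * z ^ 2 - (a ^ 2 * (1 - E ^ 2) + L ^ 2 + Q) * z + Q
          = a ^ 2 * (1 - E ^ 2) * (z - zn) * (z - zp)) :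
    ∫ z in (0 : ℝ)..zn,
        ((a * P / Δ - a * E) + L / (1 - z)) /
          (2 * Real.sqrt z * (|a| * Real.sqrt (1 - E ^ 2)) *
            Real.sqrt ((zp - z) * (zn - z)))
      = Real.pi / (2 * |a| * Real.sqrt (1 - E ^ 2) * Real.sqrt zp) *
          (L * appellF1 (1 / 2) (1 / 2) 1 1 (zn / zp) zn +
            (a * P / Δ - a * E) * gaussF (1 / 2) (1 / 2) 1 (zn / zp)) :=
  stmt_10_general a E L Δ P zn zp h0 h1 h2
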